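/- arXiv:2403.19515 — 6 statements merged into one kernel-verified Lean document; each statement's English description precedes it below -/
import Mathlib

section
/- Let C ⊆ ℝ^p be an open convex set and let (f_n) be a sequence of convex functions C → ℝ such that lim f_n(x) exists (in ℝ) for all x in a dense subset C₀ of C. Then (f_n) converges pointwise on all of C, the limit function f is finite and convex on C, and f_n → f uniformly on every compact subset of C. -/
/-!
The set of points where the sequence is bounded above is convex and contains the dense set `C₀`;
in finite dimension a convex set whose closure contains an open set contains that open set, so
the sequence is bounded above on all of `C`. Its supremum is then a finite convex, hence
continuous, function, which bounds the `f n` from above uniformly near each point; the inequality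
`2 f(c) ≤ f(y) + f(2c - y)` turns the lower bound at a nearby point `c ∈ C₀` into a uniform lower
bound. Locally uniformly bounded convex functions are locally uniformly Lipschitz, so the sequence
is equicontinuous on `C`. An equicontinuous sequence that converges on a dense set is Cauchy at
every point, and pointwise convergence of an equicontinuous sequence is uniform on compact sets.
-/

open Filter Topology Metric Set

section Equicontinuity

variable {ι X α : Type*} [TopologicalSpace X] [UniformSpace α] {F : ι → X → α}

theorem EquicontinuousAt.cauchy_map_of_mem_closure {l : Filter ι} [l.NeBot] {s : Set X} {x : X}
    (hF : EquicontinuousAt F x) (hs : ∀ y ∈ s, Cauchy (l.map (F · y))) (hx : x ∈ closure s) :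
    Cauchy (l.map (F · x)) := by
  rw [cauchy_map_iff']
  intro U hU
  obtain ⟨V, hV, hVsymm, hVU⟩ := comp_comp_symm_mem_uniformity_sets hU
  obtain ⟨y, hys, hFy⟩ := mem_closure_iff_frequently.1 hx |>.and_eventually (hF V hV) |>.exists
  have hy : _ ∈ map _ _ := cauchy_map_iff'.1 (hs y hys) hV
  rw [mem_map] at hy ⊢
  filter_upwards [hy] with ⟨i, j⟩ hij
  exact hVU ⟨F j y, ⟨F i y, hFy i, hij⟩, SetRel.symm V (hFy j)⟩

theorem EquicontinuousOn.tendstoUniformlyOn_of_tendsto {l : Filter ι} {f : X → α} {K : Set X}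
    (hK : IsCompact K) (hF : EquicontinuousOn F K) (hf : ∀ x ∈ K, Tendsto (F · x) l (𝓝 (f x))) :
    TendstoUniformlyOn F f l K := by
  have := (EquicontinuousOn.tendsto_uniformOnFun_iff_pi' (𝔖 := {K}) (by simpa using hK)
    (by simpa using hF) l f).2 ?_
  · exact UniformOnFun.tendsto_iff_tendstoUniformlyOn.1 this K rfl
  · rw [tendsto_pi_nhds]
    rintro ⟨x, hx⟩
    exact hf x (by simpa using hx)

end Equicontinuity

theorem equicontinuousAt_of_lipschitzOnWith {ι X α : Type*} [PseudoMetricSpace X]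
    [PseudoMetricSpace α] {F : ι → X → α} {K : NNReal} {s : Set X} {x : X} (hs : s ∈ 𝓝 x)
    (hF : ∀ i, LipschitzOnWith K (F i) s) : EquicontinuousAt F x := by
  refine Metric.equicontinuousAt_of_continuity_modulus (fun y => K * dist x y) ?_ F ?_
  · have : Continuous fun y => (K : ℝ) * dist x y := by fun_prop
    simpa using this.tendsto x
  · filter_upwards [hs] with y hy i
    exact (hF i).dist_le_mul x (mem_of_mem_nhds hs) y hy

variable {E : Type*} [NormedAddCommGroup E] [NormedSpace ℝ E]

theorem Convex.subset_of_isOpen_subset_closure [FiniteDimensional ℝ E] {D U : Set E}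
    (hD : Convex ℝ D) (hU : IsOpen U) (hUD : U ⊆ closure D) : U ⊆ D := by
  rcases U.eq_empty_or_nonempty with rfl | hne
  · exact empty_subset D
  have hspan : affineSpan ℝ D = ⊤ := by
    refine top_unique ?_
    rw [← hU.affineSpan_eq_top hne, affineSpan_le]
    exact hUD.trans <| closure_minimal (subset_affineSpan ℝ D)
      (AffineSubspace.closed_of_finiteDimensional _)
  calc U ⊆ interior (closure D) := interior_maximal hUD hU
    _ = interior D := hD.interior_closure_eq_interior_of_nonempty_interior
          (hD.interior_nonempty_iff_affineSpan_eq_top.2 hspan)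
    _ ⊆ D := interior_subset

theorem ConvexOn.of_tendsto {ι : Type*} {l : Filter ι} [l.NeBot] {C : Set E} {f : ι → E → ℝ}
    {g : E → ℝ} (hf : ∀ᶠ i in l, ConvexOn ℝ C (f i))
    (hg : ∀ x ∈ C, Tendsto (f · x) l (𝓝 (g x))) : ConvexOn ℝ C g := by
  obtain ⟨i₀, hi₀⟩ := hf.exists
  refine ⟨hi₀.1, fun x hx y hy a b ha hb hab => ?_⟩
  refine le_of_tendsto_of_tendsto (hg _ (hi₀.1 hx hy ha hb hab))
    (((hg x hx).const_mul a).add ((hg y hy).const_mul b)) ?_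
  filter_upwards [hf] with i hi
  exact hi.2 hx hy ha hb hab

theorem ConvexOn.two_mul_le_add_reflect {C : Set E} {g : E → ℝ} {c y : E} (hg : ConvexOn ℝ C g)
    (hy : y ∈ C) (hy' : (2 : ℝ) • c - y ∈ C) : 2 * g c ≤ g y + g ((2 : ℝ) • c - y) := by
  have hmid : (1 / 2 : ℝ) • y + (1 / 2 : ℝ) • ((2 : ℝ) • c - y) = c := by module
  have := hg.2 hy hy' (by norm_num : (0 : ℝ) ≤ 1 / 2) (by norm_num : (0 : ℝ) ≤ 1 / 2)
    (by norm_num)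
  rw [hmid, smul_eq_mul, smul_eq_mul] at this
  linarith

theorem ConvexOn.abs_le_of_forall_le {g : E → ℝ} {x c y : E} {r M B : ℝ}
    (hg : ConvexOn ℝ (ball x r) g) (hM : ∀ z ∈ ball x r, g z ≤ M) (hc : dist c x < r / 4)
    (hB : B ≤ g c) (hy : y ∈ ball x (r / 2)) : |g y| ≤ max M (M - 2 * B) := by
  have hyr : y ∈ ball x r := ball_subset_ball (by linarith [dist_nonneg.trans_lt hc]) hy
  have hreflect : (2 : ℝ) • c - y ∈ ball x r := by
    rw [mem_ball, dist_eq_norm] at hy ⊢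
    rw [dist_eq_norm] at hc
    calc ‖(2 : ℝ) • c - y - x‖ = ‖(2 : ℝ) • (c - x) - (y - x)‖ := by congr 1; module
      _ ≤ 2 * ‖c - x‖ + ‖y - x‖ := by
          refine (norm_sub_le _ _).trans ?_
          rw [norm_smul, Real.norm_two]
      _ < r := by linarith
  have hlower := hg.two_mul_le_add_reflect hyr hreflect
  have hupper := hM _ hreflect
  rw [abs_le]
  constructor <;> linarith [hM y hyr, le_max_left M (M - 2 * B), le_max_right M (M - 2 * B)]

section ConvexFamily

variable {ι : Type*} {C C₀ : Set E} {f : ι → E → ℝ}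

theorem convex_setOf_bddAbove_range (hC : Convex ℝ C) (hf : ∀ i, ConvexOn ℝ C (f i)) :
    Convex ℝ {x | x ∈ C ∧ BddAbove (range (f · x))} := by
  rintro x ⟨hxC, Mx, hMx⟩ y ⟨hyC, My, hMy⟩ a b ha hb hab
  refine ⟨hC hxC hyC ha hb hab, a * Mx + b * My, ?_⟩
  rintro _ ⟨i, rfl⟩
  calc f i (a • x + b • y) ≤ a • f i x + b • f i y := (hf i).2 hxC hyC ha hb hab
    _ ≤ a * Mx + b * My := by
        simp only [smul_eq_mul]
        gcongr
        exacts [hMx ⟨i, rfl⟩, hMy ⟨i, rfl⟩]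

theorem ConvexOn.ciSup [Nonempty ι] (hC : Convex ℝ C) (hf : ∀ i, ConvexOn ℝ C (f i))
    (hbdd : ∀ x ∈ C, BddAbove (range (f · x))) : ConvexOn ℝ C (fun x => ⨆ i, f i x) := by
  refine ⟨hC, fun x hx y hy a b ha hb hab => ciSup_le fun i => ?_⟩
  calc f i (a • x + b • y) ≤ a • f i x + b • f i y := (hf i).2 hx hy ha hb hab
    _ ≤ a • (⨆ i, f i x) + b • (⨆ i, f i y) := by
        simp only [smul_eq_mul]
        gcongr
        exacts [le_ciSup (hbdd x hx) i, le_ciSup (hbdd y hy) i]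

variable [FiniteDimensional ℝ E]

theorem bddAbove_range_of_convexOn (hCopen : IsOpen C) (hC : Convex ℝ C)
    (hf : ∀ i, ConvexOn ℝ C (f i)) (hC₀C : C₀ ⊆ C) (hdense : C ⊆ closure C₀)
    (hbdd : ∀ x ∈ C₀, BddAbove (range (f · x))) {x : E} (hx : x ∈ C) :
    BddAbove (range (f · x)) :=
  ((convex_setOf_bddAbove_range hC hf).subset_of_isOpen_subset_closure hCopen
    (hdense.trans (closure_mono fun y hy => ⟨hC₀C hy, hbdd y hy⟩)) hx).2

theorem exists_ball_forall_le_of_convexOn [Nonempty ι] (hCopen : IsOpen C) (hC : Convex ℝ C)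
    (hf : ∀ i, ConvexOn ℝ C (f i)) (hbdd : ∀ x ∈ C, BddAbove (range (f · x))) {x : E}
    (hx : x ∈ C) : ∃ r > 0, ∃ M, ball x r ⊆ C ∧ ∀ i, ∀ y ∈ ball x r, f i y ≤ M := by
  have hsup := ((ConvexOn.ciSup hC hf hbdd).continuousOn hCopen).continuousAt
    (hCopen.mem_nhds hx)
  obtain ⟨r, hr, hball⟩ := Metric.mem_nhds_iff.1 <|
    inter_mem (hsup.eventually (eventually_lt_nhds (lt_add_one _))) (hCopen.mem_nhds hx)
  exact ⟨r, hr, _, fun y hy => (hball hy).2,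
    fun i y hy => (le_ciSup (hbdd y (hball hy).2) i).trans (hball hy).1.le⟩

theorem equicontinuousAt_of_convexOn [Nonempty ι] (hCopen : IsOpen C) (hC : Convex ℝ C)
    (hf : ∀ i, ConvexOn ℝ C (f i)) (hdense : C ⊆ closure C₀)
    (hbddBelow : ∀ x ∈ C₀, BddBelow (range (f · x)))
    (hbddAbove : ∀ x ∈ C, BddAbove (range (f · x))) {x : E} (hx : x ∈ C) :
    EquicontinuousAt f x := by
  obtain ⟨r, hr, M, hball, hM⟩ := exists_ball_forall_le_of_convexOn hCopen hC hf hbddAbove hx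
  obtain ⟨c, hcC₀, hcx⟩ : ∃ c ∈ C₀, dist c x < r / 4 := by
    obtain ⟨c, hcC₀, hc⟩ := Metric.mem_closure_iff.1 (hdense hx) (r / 4) (by positivity)
    exact ⟨c, hcC₀, by rwa [dist_comm]⟩
  obtain ⟨B, hB⟩ := hbddBelow c hcC₀
  have hfball (ρ : ℝ) (hρ : ρ ≤ r) (i : ι) : ConvexOn ℝ (ball x ρ) (f i) :=
    (hf i).subset ((ball_subset_ball hρ).trans hball) (convex_ball x ρ)
  have hlip (i : ι) := (hfball (r / 2) (by linarith) i).lipschitzOnWith_of_abs_le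
    (by positivity : 0 < r / 4) fun y hy =>
      (hfball r le_rfl i).abs_le_of_forall_le (hM i) hcx (hB ⟨i, rfl⟩) hy
  exact equicontinuousAt_of_lipschitzOnWith (ball_mem_nhds x (by linarith)) hlip

end ConvexFamily

/-- pointwise convergence of convex functions on a dense subset of an open
convex set implies pointwise convergence everywhere, the limit is convex, and convergence
is uniform on compact subsets. -/
theorem stmt0 (p : ℕ) (C C₀ : Set (EuclideanSpace ℝ (Fin p)))
    (f : ℕ → EuclideanSpace ℝ (Fin p) → ℝ)
    (hCopen : IsOpen C) (hCconv : Convex ℝ C)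
    (hconv : ∀ n, ConvexOn ℝ C (f n))
    (hC₀C : C₀ ⊆ C) (hdense : C ⊆ closure C₀)
    (hlim : ∀ x ∈ C₀, ∃ l : ℝ, Tendsto (fun n => f n x) atTop (𝓝 l)) :
    ∃ g : EuclideanSpace ℝ (Fin p) → ℝ,
      ConvexOn ℝ C g ∧
      (∀ x ∈ C, Tendsto (fun n => f n x) atTop (𝓝 (g x))) ∧
      (∀ K : Set (EuclideanSpace ℝ (Fin p)), K ⊆ C → IsCompact K →
        TendstoUniformlyOn f g atTop K) := by
  have hbddAbove : ∀ x ∈ C, BddAbove (range (f · x)) := fun x hx =>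
    bddAbove_range_of_convexOn hCopen hCconv hconv hC₀C hdense
      (fun y hy => (hlim y hy).choose_spec.bddAbove_range) hx
  have hequi : ∀ x ∈ C, EquicontinuousAt f x := fun x hx =>
    equicontinuousAt_of_convexOn hCopen hCconv hconv hdense
      (fun y hy => (hlim y hy).choose_spec.bddBelow_range) hbddAbove hx
  have htendsto : ∀ x ∈ C, Tendsto (f · x) atTop (𝓝 (limUnder atTop (f · x))) := fun x hx =>
    CauchySeq.tendsto_limUnder <| (hequi x hx).cauchy_map_of_mem_closure
      (fun y hy => (hlim y hy).choose_spec.cauchySeq) (hdense hx)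
  refine ⟨_, ConvexOn.of_tendsto (.of_forall hconv) htendsto, htendsto, fun K hKC hK => ?_⟩
  exact EquicontinuousOn.tendstoUniformlyOn_of_tendsto hK
    (fun x hx => (hequi x (hKC hx)).equicontinuousWithinAt K) fun x hx => htendsto x (hKC hx)
end

section
/- Consider convex functions f_n : ℝ^p → ℝ of the form f_n(u) = uᵀ Σ_n u + R_n(u), where Σ_n are random symmetric matrices converging almost surely to a positive definite matrix Σ, and R_n(u) → 0 almost surely for every fixed u ∈ ℝ^p. Then any sequence (α_n) of minimizers of f_n satisfies ‖α_n‖ → 0 almost surely. -/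
/-!
Almost surely `Σₙ → Σ` and, on a countable set `T`, `Rₙ → 0`; so `fₙ → q := uᵀ Σ u` on `T`.
Choose `T` dense, containing `0`, and such that every ball lies in the convex hull of a finite
subset of `T`. Convexity then bounds the `fₙ` above on balls, uniformly in large `n`, which makes
them eventually equi-Lipschitz there; with convergence on the dense set `T` this gives a lower
bound `fₙ > fₙ(0)` on each sphere `‖u‖ = δ`, because `q` is positive away from `0`. A minimizer
outside that sphere would, by convexity, push `fₙ` down to at most `fₙ(0)` at some point of the
sphere.
-/

open Filter Topology MeasureTheory Metric Set
open scoped NNReal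

section Convex

variable {E : Type*} [NormedAddCommGroup E] [NormedSpace ℝ E] {f : E → ℝ}

lemma ConvexOn.map_smul_le_map_zero (hf : ConvexOn ℝ univ f) {x : E} (hx : ∀ u, f x ≤ f u)
    {t : ℝ} (ht₀ : 0 ≤ t) (ht₁ : t ≤ 1) : f (t • x) ≤ f 0 := by
  have h := hf.2 (mem_univ x) (mem_univ 0) ht₀ (sub_nonneg.2 ht₁) (add_sub_cancel t 1)
  rw [smul_zero, add_zero, smul_eq_mul, smul_eq_mul] at h
  nlinarith [hx 0]

/-- Convexity at the midpoint of `a` and its reflection `2 x₀ - a` turns an upper bound into a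
lower one. -/
lemma ConvexOn.abs_le_of_forall_le_s2 {x₀ : E} {r M : ℝ} (hf : ConvexOn ℝ (ball x₀ r) f)
    (hM : ∀ a ∈ ball x₀ r, f a ≤ M) {a : E} (ha : a ∈ ball x₀ r) : |f a| ≤ M + 2 * |f x₀| := by
  have ha' : (2 : ℝ) • x₀ - a ∈ ball x₀ r := by
    rw [mem_ball, dist_eq_norm] at ha ⊢
    rwa [two_smul, add_sub_assoc, add_sub_cancel_left, ← norm_neg, neg_sub]
  have hmid := hf.2 ha ha' (by norm_num : (0 : ℝ) ≤ 1 / 2) (by norm_num : (0 : ℝ) ≤ 1 / 2)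
    (by norm_num)
  have hx₀ : (1 / 2 : ℝ) • a + (1 / 2 : ℝ) • ((2 : ℝ) • x₀ - a) = x₀ := by
    rw [smul_sub, smul_smul]; norm_num
  rw [hx₀, smul_eq_mul, smul_eq_mul] at hmid
  rw [abs_le]
  constructor <;> nlinarith [hM a ha, hM _ ha', neg_abs_le (f x₀), le_abs_self (f x₀)]

lemma exists_countable_dense_forall_closedBall_subset_convexHull [FiniteDimensional ℝ E] :
    ∃ T : Set E, T.Countable ∧ Dense T ∧ (0 : E) ∈ T ∧
      ∀ r, ∃ t : Finset E, ↑t ⊆ T ∧ closedBall 0 r ⊆ convexHull ℝ (t : Set E) := by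
  obtain ⟨D, hDc, hD⟩ := TopologicalSpace.exists_countable_dense E
  have hpoly (n : ℕ) : ∃ t : Finset E, closedBall 0 n ⊆ convexHull ℝ (t : Set E) := by
    obtain ⟨t, ht, -⟩ :=
      (convex_closedBall (0 : E) n).exists_subset_interior_convexHull_finset_of_isCompact
        (isCompact_closedBall 0 n) (univ_mem (f := 𝓝ˢ _))
    exact ⟨t, ht.trans interior_subset⟩
  choose t ht using hpoly
  have htT (n : ℕ) : (t n : Set E) ⊆ insert 0 (D ∪ ⋃ n, t n) :=
    (subset_iUnion (fun n => (t n : Set E)) n).trans (subset_union_right.trans (subset_insert _ _))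
  refine ⟨insert 0 (D ∪ ⋃ n, t n),
    (hDc.union (countable_iUnion fun n => (t n).countable_toSet)).insert 0,
    hD.mono (subset_union_left.trans (subset_insert _ _)), mem_insert _ _, fun r => ?_⟩
  obtain ⟨n, hn⟩ := exists_nat_ge r
  exact ⟨t n, htT n, (closedBall_subset_closedBall hn).trans (ht n)⟩

variable {g : ℕ → E → ℝ} {q : E → ℝ}

lemma exists_eventually_forall_convexHull_le (hg : ∀ n, ConvexOn ℝ univ (g n)) (t : Finset E)
    (hgt : ∀ v ∈ t, Tendsto (g · v) atTop (𝓝 (q v))) :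
    ∃ M, ∀ᶠ n in atTop, ∀ x ∈ convexHull ℝ (t : Set E), g n x ≤ M := by
  obtain ⟨M, hM⟩ := (t.finite_toSet.image q).bddAbove
  refine ⟨M + 1, ?_⟩
  have hvert : ∀ᶠ n in atTop, ∀ v ∈ t, g n v < M + 1 :=
    (eventually_all_finset t).2 fun v hv =>
      (hgt v hv).eventually_lt_const (by linarith [hM (mem_image_of_mem q hv)])
  filter_upwards [hvert] with n hn x hx
  obtain ⟨v, hv, hxv⟩ := (hg n).exists_ge_of_mem_convexHull (subset_univ _) hx
  exact hxv.trans (hn v hv).le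

lemma exists_eventually_lipschitzOnWith (hg : ∀ n, ConvexOn ℝ univ (g n)) {x₀ : E} {r l : ℝ}
    (hr : 0 < r) {t : Finset E} (ht : ball x₀ (2 * r) ⊆ convexHull ℝ (t : Set E))
    (hgt : ∀ v ∈ t, Tendsto (g · v) atTop (𝓝 (q v))) (hx₀ : Tendsto (g · x₀) atTop (𝓝 l)) :
    ∃ K : ℝ≥0, ∀ᶠ n in atTop, LipschitzOnWith K (g n) (ball x₀ r) := by
  obtain ⟨M, hM⟩ := exists_eventually_forall_convexHull_le hg t hgt
  have hbdd : ∀ᶠ n in atTop, |g n x₀| ≤ |l| + 1 :=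
    hx₀.abs.eventually_le_const (lt_add_one |l|)
  refine ⟨(2 * (M + 2 * (|l| + 1)) / r).toNNReal, ?_⟩
  filter_upwards [hM, hbdd] with n hMn hn
  have hball := (hg n).subset (subset_univ _) (convex_ball x₀ (2 * r))
  have key := hball.lipschitzOnWith_of_abs_le (M := M + 2 * (|l| + 1)) hr fun a ha =>
    (hball.abs_le_of_forall_le_s2 (fun b hb => hMn b (ht hb)) ha).trans (by linarith)
  rwa [two_mul r, add_sub_cancel_right] at key

end Convex

lemma eventually_forall_lt_of_lipschitzOnWith {X : Type*} [PseudoMetricSpace X]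
    {g : ℕ → X → ℝ} {q : X → ℝ} {s U D : Set X} {K : ℝ≥0} {b ε : ℝ} (hε : 0 < ε)
    (hs : IsCompact s) (hU : thickening ε s ⊆ U) (hK : ∀ᶠ n in atTop, LipschitzOnWith K (g n) U)
    (hD : Dense D) (hgD : ∀ y ∈ D, Tendsto (g · y) atTop (𝓝 (q y)))
    (hq : ∀ y ∈ thickening ε s, b < q y) :
    ∀ᶠ n in atTop, ∀ x ∈ s, b - K * ε < g n x := by
  have hcover : s ⊆ ⋃ y ∈ D ∩ thickening ε s, ball y ε := by
    intro x hx
    obtain ⟨y, hyx, hyD⟩ := Metric.dense_iff.1 hD x ε hε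
    rw [mem_ball] at hyx
    exact mem_biUnion ⟨hyD, mem_thickening_iff.2 ⟨x, hx, hyx⟩⟩ (mem_ball_comm.1 hyx)
  obtain ⟨N, hND, hN, hsN⟩ := hs.elim_finite_subcover_image (fun _ _ => isOpen_ball) hcover
  have hnet : ∀ᶠ n in atTop, ∀ y ∈ N, b < g n y :=
    (eventually_all_finite hN).2 fun y hy =>
      (hgD y (hND hy).1).eventually_const_lt (hq y (hND hy).2)
  filter_upwards [hK, hnet] with n hKn hn x hx
  obtain ⟨y, hyN, hxy⟩ := mem_iUnion₂.1 (hsN hx)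
  have hxU : x ∈ U := hU (self_subset_thickening hε s hx)
  have hlip : |g n x - g n y| ≤ K * dist x y := by
    simpa only [Real.dist_eq] using hKn.dist_le_mul x hxU y (hU (hND hyN).2)
  have : (K : ℝ) * dist x y ≤ K * ε := mul_le_mul_of_nonneg_left (mem_ball.1 hxy).le K.2
  linarith [neg_abs_le (g n x - g n y), hn y hyN]

lemma norm_bounds_of_mem_thickening_sphere {E : Type*} [SeminormedAddCommGroup E] {ε δ : ℝ} {y : E}
    (hy : y ∈ thickening ε (sphere (0 : E) δ)) :
    δ - ε < ‖y‖ ∧ ‖y‖ < δ + ε := by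
  obtain ⟨z, hz, hyz⟩ := mem_thickening_iff.1 hy
  rw [mem_sphere_zero_iff_norm] at hz
  rw [dist_eq_norm] at hyz
  constructor <;> linarith [norm_sub_norm_le z y, norm_sub_norm_le y z, norm_sub_rev y z]

section Minimizer

variable {E : Type*} [NormedAddCommGroup E] [NormedSpace ℝ E] [ProperSpace E]
  {g : ℕ → E → ℝ} {q : E → ℝ} {T : Set E}

lemma eventually_forall_sphere_map_zero_lt (hg : ∀ n, ConvexOn ℝ univ (g n))
    (hq : Continuous q) (hq0 : ∀ x ≠ 0, q 0 < q x) (hT : Dense T) (hT0 : (0 : E) ∈ T)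
    (hThull : ∀ r, ∃ t : Finset E, ↑t ⊆ T ∧ closedBall 0 r ⊆ convexHull ℝ (t : Set E))
    (hgT : ∀ u ∈ T, Tendsto (g · u) atTop (𝓝 (q u))) {δ : ℝ} (hδ : 0 < δ) :
    ∀ᶠ n in atTop, ∀ x ∈ sphere (0 : E) δ, g n 0 < g n x := by
  obtain ⟨t, htT, ht⟩ := hThull (4 * δ)
  obtain ⟨K, hK⟩ := exists_eventually_lipschitzOnWith hg (by positivity : 0 < 2 * δ)
    ((ball_subset_closedBall.trans (closedBall_subset_closedBall (by linarith))).trans ht)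
    (fun v hv => hgT v (htT hv)) (hgT 0 hT0)
  have hA : IsCompact (closedBall (0 : E) (2 * δ) \ ball 0 (δ / 2)) :=
    (isCompact_closedBall 0 _).diff isOpen_ball
  obtain ⟨b, hqb, hb⟩ := hA.exists_forall_le' hq.continuousOn (a := q 0) fun y hy =>
    hq0 y fun h => hy.2 (h ▸ mem_ball_self (by positivity))
  obtain ⟨ε₀, hε₀, hKε₀⟩ := exists_pos_mul_lt (by linarith : 0 < (b - q 0) / 2) K
  set ε := min ε₀ (δ / 2)
  have hε : 0 < ε := lt_min hε₀ (by positivity)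
  have hεδ : ε ≤ δ / 2 := min_le_right _ _
  have hKε : K * ε < (b - q 0) / 2 :=
    (mul_le_mul_of_nonneg_left (min_le_left _ _) K.2).trans_lt hKε₀
  have hsphere : ∀ᶠ n in atTop, ∀ x ∈ sphere (0 : E) δ, (q 0 + b) / 2 - K * ε < g n x := by
    refine eventually_forall_lt_of_lipschitzOnWith hε (isCompact_sphere 0 δ) (fun y hy => ?_) hK
      hT hgT fun y hy => ?_
    · have := norm_bounds_of_mem_thickening_sphere hy
      rw [mem_ball_zero_iff]; linarith
    · have := norm_bounds_of_mem_thickening_sphere hy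
      refine lt_of_lt_of_le (by linarith) (hb y ⟨?_, ?_⟩)
      · rw [mem_closedBall_zero_iff]; linarith
      · rw [mem_ball_zero_iff, not_lt]; linarith
  have hzero : ∀ᶠ n in atTop, g n 0 < (q 0 + b) / 2 - K * ε :=
    (hgT 0 hT0).eventually_lt_const (by linarith)
  filter_upwards [hsphere, hzero] with n hn hn0 x hx
  exact hn0.trans (hn x hx)

lemma tendsto_zero_of_forall_le_of_convexOn (hg : ∀ n, ConvexOn ℝ univ (g n))
    (hq : Continuous q) (hq0 : ∀ x ≠ 0, q 0 < q x) (hT : Dense T) (hT0 : (0 : E) ∈ T)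
    (hThull : ∀ r, ∃ t : Finset E, ↑t ⊆ T ∧ closedBall 0 r ⊆ convexHull ℝ (t : Set E))
    (hgT : ∀ u ∈ T, Tendsto (g · u) atTop (𝓝 (q u))) {β : ℕ → E}
    (hβ : ∀ n u, g n (β n) ≤ g n u) :
    Tendsto β atTop (𝓝 0) := by
  refine Metric.tendsto_nhds.2 fun δ hδ => ?_
  filter_upwards [eventually_forall_sphere_map_zero_lt hg hq hq0 hT hT0 hThull hgT hδ]
    with n hn
  rw [dist_zero_right]
  by_contra! hβδ
  have hβpos : 0 < ‖β n‖ := hδ.trans_le hβδ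
  have hc : (δ / ‖β n‖) • β n ∈ sphere (0 : E) δ := by
    rw [mem_sphere_zero_iff_norm, norm_smul, Real.norm_of_nonneg (by positivity),
      div_mul_cancel₀ _ hβpos.ne']
  exact (hn _ hc).not_ge
    ((hg n).map_smul_le_map_zero (hβ n) (by positivity) ((div_le_one hβpos).2 hβδ))

end Minimizer

lemma Matrix.PosDef.sum_sum_mul_mul_pos {n : Type*} [Fintype n] {S : Matrix n n ℝ}
    (hS : S.PosDef) {x : n → ℝ} (hx : x ≠ 0) : 0 < ∑ i, ∑ j, S i j * x i * x j := by
  have h := hS.dotProduct_mulVec_pos hx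
  simp only [dotProduct, Matrix.mulVec, star_trivial, Finset.mul_sum] at h
  exact h.trans_eq (Finset.sum_congr rfl fun i _ => Finset.sum_congr rfl fun j _ => by ring)

theorem stmt2_general (p : ℕ) (Ω : Type*) [MeasurableSpace Ω] (P : Measure Ω)
    (Sn : ℕ → Ω → Matrix (Fin p) (Fin p) ℝ) (S : Matrix (Fin p) (Fin p) ℝ)
    (R : ℕ → Ω → EuclideanSpace ℝ (Fin p) → ℝ)
    (f : ℕ → Ω → EuclideanSpace ℝ (Fin p) → ℝ)
    (α : ℕ → Ω → EuclideanSpace ℝ (Fin p))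
    (hf : ∀ n ω u, f n ω u = (∑ i, ∑ j, Sn n ω i j * u i * u j) + R n ω u)
    (hconv : ∀ n ω, ConvexOn ℝ Set.univ (f n ω))
    (hSpd : S.PosDef)
    (hSconv : ∀ᵐ ω ∂P, ∀ i j, Tendsto (fun n => Sn n ω i j) atTop (𝓝 (S i j)))
    (hR : ∀ u, ∀ᵐ ω ∂P, Tendsto (fun n => R n ω u) atTop (𝓝 0))
    (hmin : ∀ n ω u, f n ω (α n ω) ≤ f n ω u) :
    ∀ᵐ ω ∂P, Tendsto (fun n => ‖α n ω‖) atTop (𝓝 0) := by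
  set q : EuclideanSpace ℝ (Fin p) → ℝ := fun u => ∑ i, ∑ j, S i j * u i * u j
  have hq0 (x) (hx : x ≠ 0) : q 0 < q x := by
    simpa [q] using hSpd.sum_sum_mul_mul_pos ((WithLp.ofLp_eq_zero 2).not.2 hx)
  obtain ⟨T, hTc, hT, hT0, hThull⟩ :=
    exists_countable_dense_forall_closedBall_subset_convexHull (E := EuclideanSpace ℝ (Fin p))
  have hRT : ∀ᵐ ω ∂P, ∀ u ∈ T, Tendsto (fun n => R n ω u) atTop (𝓝 0) :=
    (ae_ball_iff hTc).2 fun u _ => hR u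
  filter_upwards [hSconv, hRT] with ω hSω hRω
  have hfT (u) (hu : u ∈ T) : Tendsto (fun n => f n ω u) atTop (𝓝 (q u)) := by
    simp only [hf]
    simpa using (tendsto_finsetSum _ fun i _ => tendsto_finsetSum _ fun j _ =>
      ((hSω i j).mul_const _).mul_const _).add (hRω u hu)
  exact tendsto_zero_iff_norm_tendsto_zero.1 <| tendsto_zero_of_forall_le_of_convexOn
    (fun n => hconv n ω) (by fun_prop) hq0 hT hT0 hThull hfT fun n u => hmin n ω u

/-- minimizers of random convex functions of the form
`f_n(u) = uᵀ Σ_n u + R_n(u)` with `Σ_n → Σ` positive definite a.s. and `R_n(u) → 0` a.s.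
pointwise, converge to `0` in norm almost surely. -/
theorem stmt2 (p : ℕ) (Ω : Type*) [MeasurableSpace Ω] (P : Measure Ω)
    [IsProbabilityMeasure P]
    (Sn : ℕ → Ω → Matrix (Fin p) (Fin p) ℝ) (S : Matrix (Fin p) (Fin p) ℝ)
    (R : ℕ → Ω → EuclideanSpace ℝ (Fin p) → ℝ)
    (f : ℕ → Ω → EuclideanSpace ℝ (Fin p) → ℝ)
    (α : ℕ → Ω → EuclideanSpace ℝ (Fin p))
    (hf : ∀ n ω u, f n ω u = (∑ i, ∑ j, Sn n ω i j * u i * u j) + R n ω u)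
    (hconv : ∀ n ω, ConvexOn ℝ Set.univ (f n ω))
    (hSsymm : S.IsSymm) (hSpd : S.PosDef)
    (hSconv : ∀ᵐ ω ∂P, ∀ i j, Tendsto (fun n => Sn n ω i j) atTop (𝓝 (S i j)))
    (hR : ∀ u, ∀ᵐ ω ∂P, Tendsto (fun n => R n ω u) atTop (𝓝 0))
    (hmin : ∀ n ω u, f n ω (α n ω) ≤ f n ω u) :
    ∀ᵐ ω ∂P, Tendsto (fun n => ‖α n ω‖) atTop (𝓝 0) :=
  stmt2_general p Ω P Sn S R f α hf hconv hSpd hSconv hR hmin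
end

section
/- Let (β̂_n) be a sequence of random vectors in ℝ^p with ‖β̂_n − β‖ = o(n^{−1/2} log n) almost surely, and let (a_n) be a positive sequence with a_n → 0 and (n^{−1/2} log n)/a_n → 0. Define the thresholded estimator β̃_n componentwise by β̃_{n,j} = β̂_{n,j} · 1{|β̂_{n,j}| > a_n}. Then almost surely, for all sufficiently large n: β̃_{n,j} = β̂_{n,j} and sign(β̃_{n,j}) = sign(β_j) for every j with β_j ≠ 0, and β̃_{n,j} = 0 for every j with β_j = 0. -/
open Filter Topology MeasureTheory Asymptotics

/-! On the support of `β`, consistency `β̂_n → β` together with `a_n → 0` makes `|β̂_{n,j}|`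
eventually exceed the threshold and fixes its sign. Off the support, `|β̂_{n,j}| ≤ ‖β̂_n − β‖`
is `o(n^{-1/2} log n)`, hence `o(a_n)`, so it eventually falls below `a_n`. -/

noncomputable def hardThreshold (t x : ℝ) : ℝ :=
  if t < |x| then x else 0

theorem hardThreshold_of_lt_abs {t x : ℝ} (h : t < |x|) : hardThreshold t x = x :=
  if_pos h

theorem hardThreshold_of_abs_le {t x : ℝ} (h : |x| ≤ t) : hardThreshold t x = 0 :=
  if_neg h.not_gt

theorem Real.eventually_sign_eq {α : Type*} {l : Filter α} {u : α → ℝ} {b : ℝ}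
    (hu : Tendsto u l (𝓝 b)) (hb : b ≠ 0) : ∀ᶠ n in l, Real.sign (u n) = Real.sign b := by
  rcases hb.lt_or_gt with hb | hb
  · filter_upwards [hu.eventually_lt_const hb] with n hn
    rw [Real.sign_of_neg hn, Real.sign_of_neg hb]
  · filter_upwards [hu.eventually_const_lt hb] with n hn
    rw [Real.sign_of_pos hn, Real.sign_of_pos hb]

theorem eventually_hardThreshold_eq_self_of_tendsto {α : Type*} {l : Filter α} {u a : α → ℝ}
    {b : ℝ} (hu : Tendsto u l (𝓝 b)) (ha : Tendsto a l (𝓝 0)) (hb : b ≠ 0) :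
    ∀ᶠ n in l, hardThreshold (a n) (u n) = u n ∧
      Real.sign (hardThreshold (a n) (u n)) = Real.sign b := by
  have hb2 : 0 < |b| / 2 := by positivity
  filter_upwards [ha.eventually_lt_const hb2,
    hu.abs.eventually_const_lt (half_lt_self (abs_pos.2 hb)), Real.eventually_sign_eq hu hb]
    with n han hun hsign
  rw [hardThreshold_of_lt_abs (han.trans hun)]
  exact ⟨rfl, hsign⟩

theorem eventually_hardThreshold_eq_zero_of_isLittleO {α : Type*} {l : Filter α} {u a : α → ℝ}
    (hu : u =o[l] a) (ha : ∀ᶠ n in l, 0 < a n) :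
    ∀ᶠ n in l, hardThreshold (a n) (u n) = 0 := by
  filter_upwards [hu.def one_half_pos, ha] with n hun han
  rw [Real.norm_eq_abs, Real.norm_eq_abs, abs_of_pos han] at hun
  exact hardThreshold_of_abs_le (by linarith)

theorem stmt7_general (p : ℕ) (Ω : Type*) [MeasurableSpace Ω] (P : Measure Ω)
    (β : EuclideanSpace ℝ (Fin p)) (βhat : ℕ → Ω → EuclideanSpace ℝ (Fin p))
    (a : ℕ → ℝ) (hapos : ∀ n, 0 < a n)
    (ha0 : Tendsto a atTop (𝓝 0))
    (harate : Tendsto (fun n : ℕ => ((n : ℝ) ^ (-(1/2 : ℝ)) * Real.log n) / a n) atTop (𝓝 0))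
    (hrate : ∀ᵐ ω ∂P,
      (fun n => ‖βhat n ω - β‖) =o[atTop]
        (fun n : ℕ => (n : ℝ) ^ (-(1/2 : ℝ)) * Real.log n)) :
    ∀ᵐ ω ∂P, ∃ N : ℕ, ∀ n ≥ N,
      (∀ j, β j ≠ 0 →
        (if a n < |βhat n ω j| then βhat n ω j else 0) = βhat n ω j ∧
        Real.sign (if a n < |βhat n ω j| then βhat n ω j else 0) = Real.sign (β j)) ∧
      (∀ j, β j = 0 → (if a n < |βhat n ω j| then βhat n ω j else 0) = 0) := by
  have hrate_a : (fun n : ℕ => (n : ℝ) ^ (-(1/2 : ℝ)) * Real.log n) =o[atTop] a :=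
    (isLittleO_iff_tendsto fun n h => absurd h (hapos n).ne').2 harate
  filter_upwards [hrate] with ω hω
  have hdiff : (fun n => βhat n ω - β) =o[atTop] a := isLittleO_norm_left.1 (hω.trans hrate_a)
  have hcoord : ∀ j, (fun n => βhat n ω j - β j) =o[atTop] a := fun j => by
    simpa using ((EuclideanSpace.proj (𝕜 := ℝ) j).isBigO_comp _ atTop).trans_isLittleO hdiff
  rw [← eventually_atTop, eventually_and]
  refine ⟨eventually_all.2 fun j => eventually_imp_distrib_left.2 fun hj => ?_,
    eventually_all.2 fun j => eventually_imp_distrib_left.2 fun hj => ?_⟩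
  · have hconv : Tendsto (fun n => βhat n ω j) atTop (𝓝 (β j)) := by
      simpa using ((hcoord j).trans_tendsto ha0).add_const (β j)
    exact eventually_hardThreshold_eq_self_of_tendsto hconv ha0 hj
  · have hsmall : (fun n => βhat n ω j) =o[atTop] a := by simpa [hj] using hcoord j
    exact eventually_hardThreshold_eq_zero_of_isLittleO hsmall (.of_forall hapos)

/-- the thresholded Lasso estimator is eventually sign-consistent almost
surely: with `‖β̂_n − β‖ = o(n^{-1/2} log n)` a.s. and thresholds `a_n → 0` with
`(n^{-1/2} log n)/a_n → 0`, eventually `β̃_{n,j} = β̂_{n,j}` with the sign of `β_j` on the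
support of `β`, and `β̃_{n,j} = 0` off the support. -/
theorem stmt7 (p : ℕ) (Ω : Type*) [MeasurableSpace Ω] (P : Measure Ω)
    [IsProbabilityMeasure P]
    (β : EuclideanSpace ℝ (Fin p)) (βhat : ℕ → Ω → EuclideanSpace ℝ (Fin p))
    (a : ℕ → ℝ) (hapos : ∀ n, 0 < a n)
    (ha0 : Tendsto a atTop (𝓝 0))
    (harate : Tendsto (fun n : ℕ => ((n : ℝ) ^ (-(1/2 : ℝ)) * Real.log n) / a n) atTop (𝓝 0))
    (hrate : ∀ᵐ ω ∂P,
      (fun n => ‖βhat n ω - β‖) =o[atTop]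
        (fun n : ℕ => (n : ℝ) ^ (-(1/2 : ℝ)) * Real.log n)) :
    ∀ᵐ ω ∂P, ∃ N : ℕ, ∀ n ≥ N,
      (∀ j, β j ≠ 0 →
        (if a n < |βhat n ω j| then βhat n ω j else 0) = βhat n ω j ∧
        Real.sign (if a n < |βhat n ω j| then βhat n ω j else 0) = Real.sign (β j)) ∧
      (∀ j, β j = 0 → (if a n < |βhat n ω j| then βhat n ω j else 0) = 0) :=
  stmt7_general p Ω P β βhat a hapos ha0 harate hrate
end

section
/- Let β ∈ ℝ^p with β_j ≠ 0 exactly for j ∈ {1,…,p₀} and let λ_n ≥ 0 with n^{−1/2} λ_n → λ₀ ∈ [0,∞). Then for every u ∈ ℝ^p, λ_n Σ_{j=1}^p ( |β_j + u_j/√n| − |β_j| ) → λ₀ ( Σ_{j=1}^{p₀} sign(β_j) u_j + Σ_{j=p₀+1}^{p} |u_j| ) as n → ∞. -/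
open Filter Topology

/-! Away from the support the penalty term is exactly `|u_j| / √n`; on the support,
`|β_j + u_j/√n| - |β_j| = sign(β_j) u_j / √n` as soon as `|u_j| / √n < |β_j|`.
So `√n Σ_j (|β_j + u_j/√n| - |β_j|)` is eventually constant, and the factor
`λ_n / √n → λ₀` gives the limit. -/

theorem abs_add_sub_abs_of_abs_lt {b x : ℝ} (h : |x| < |b|) :
    |b + x| - |b| = Real.sign b * x := by
  rcases lt_trichotomy b 0 with hb | rfl | hb
  · rw [abs_of_neg hb] at h
    rw [abs_of_neg hb, abs_of_neg (by linarith [(abs_lt.mp h).2]), Real.sign_of_neg hb]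
    ring
  · rw [abs_zero] at h
    exact absurd h (abs_nonneg x).not_gt
  · rw [abs_of_pos hb] at h
    rw [abs_of_pos hb, abs_of_pos (by linarith [(abs_lt.mp h).1]), Real.sign_of_pos hb]
    ring

theorem eventually_mul_abs_add_div_sub_abs (b x : ℝ) :
    ∀ᶠ t in atTop, t * (|b + x / t| - |b|) = if b ≠ 0 then Real.sign b * x else |x| := by
  by_cases hb : b = 0
  · filter_upwards [eventually_gt_atTop 0] with t ht
    rw [if_neg (not_not.mpr hb), hb, zero_add, abs_zero, sub_zero, abs_div, abs_of_pos ht,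
      mul_div_cancel₀ _ ht.ne']
  · have hsmall : ∀ᶠ t in atTop, |x / t| < |b| := by
      have : Tendsto (fun t : ℝ => |x / t|) atTop (𝓝 0) := by
        simpa using (tendsto_const_nhds.div_atTop (tendsto_id (α := ℝ))).abs
      exact this.eventually_lt_const (abs_pos.mpr hb)
    filter_upwards [hsmall, eventually_gt_atTop 0] with t hlt ht
    rw [if_pos hb, abs_add_sub_abs_of_abs_lt hlt]
    field_simp

theorem tendsto_mul_sum_abs_add_div_sub_abs {α ι : Type*} [Fintype ι] {l : Filter α}
    {s lam : α → ℝ} {L : ℝ} (hs : Tendsto s l atTop) (hlam : Tendsto (fun a => lam a / s a) l (𝓝 L))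
    (β u : ι → ℝ) :
    Tendsto (fun a => lam a * ∑ j, (|β j + u j / s a| - |β j|)) l
      (𝓝 (L * ∑ j, if β j ≠ 0 then Real.sign (β j) * u j else |u j|)) := by
  refine (hlam.mul_const _).congr' ?_
  have hconst := hs.eventually (eventually_all.mpr fun j =>
    eventually_mul_abs_add_div_sub_abs (β j) (u j))
  filter_upwards [hconst, hs.eventually (eventually_ne_atTop 0)] with a ha hne
  rw [← Finset.sum_congr rfl fun j _ => ha j, ← Finset.mul_sum]
  field_simp

theorem stmt8_general (p p₀ : ℕ) (β : Fin p → ℝ)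
    (hsupp : ∀ j : Fin p, β j ≠ 0 ↔ (j : ℕ) < p₀)
    (lam : ℕ → ℝ) (lam0 : ℝ)
    (hlimit : Tendsto (fun n => lam n / Real.sqrt n) atTop (𝓝 lam0))
    (u : Fin p → ℝ) :
    Tendsto (fun n : ℕ => lam n * ∑ j, (|β j + u j / Real.sqrt n| - |β j|)) atTop
      (𝓝 (lam0 * ∑ j : Fin p, if (j : ℕ) < p₀ then Real.sign (β j) * u j else |u j|)) := by
  simp only [← hsupp]
  exact tendsto_mul_sum_abs_add_div_sub_abs
    (Real.tendsto_sqrt_atTop.comp tendsto_natCast_atTop_atTop) hlimit β u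

/-- limit of the Lasso penalty difference term.  If `β_j ≠ 0` exactly for
`j < p₀` and `λ_n/√n → lam0`, then
`λ_n Σ_j (|β_j + u_j/√n| − |β_j|) → lam0 (Σ_{j<p₀} sign(β_j) u_j + Σ_{j≥p₀} |u_j|)`. -/
theorem stmt8 (p p₀ : ℕ) (hp : p₀ ≤ p) (β : Fin p → ℝ)
    (hsupp : ∀ j : Fin p, β j ≠ 0 ↔ (j : ℕ) < p₀)
    (lam : ℕ → ℝ) (hlam : ∀ n, 0 ≤ lam n) (lam0 : ℝ) (hlam0 : 0 ≤ lam0)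
    (hlimit : Tendsto (fun n => lam n / Real.sqrt n) atTop (𝓝 lam0))
    (u : Fin p → ℝ) :
    Tendsto (fun n : ℕ => lam n * ∑ j, (|β j + u j / Real.sqrt n| - |β j|)) atTop
      (𝓝 (lam0 * ∑ j : Fin p, if (j : ℕ) < p₀ then Real.sign (β j) * u j else |u j|)) :=
  stmt8_general p p₀ β hsupp lam lam0 hlimit u
end

section
/- Let U_n and U_∞ be convex functions ℝ^p → ℝ (realized on a common probability space) such that U_∞ has a unique minimizer ξ_∞, U_n → U_∞ uniformly on compact subsets of ℝ^p, and ξ_n is a minimizer of U_n for each n. Then ξ_n → ξ_∞. -/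
/-! Fix `r > 0`. Since `U_∞` is continuous and `ξ_∞` is its strict minimizer, `U_∞` exceeds
`U_∞ ξ_∞` by some `δ > 0` on the compact sphere of radius `r` about `ξ_∞`. If a minimizer `ξ_n`
lay outside that sphere, convexity of `U_n` along the segment `[ξ_∞, ξ_n]` would give a point `y`
of the sphere with `U_n y ≤ U_n ξ_∞`; once `U_n` is `δ/2`-close to `U_∞` on the closed ball this
contradicts `U_∞ y ≥ U_∞ ξ_∞ + δ`. -/

open Filter Topology Metric

theorem ConvexOn.exists_mem_sphere_le {E : Type*} [NormedAddCommGroup E] [NormedSpace ℝ E]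
    {f : E → ℝ} (hf : ConvexOn ℝ Set.univ f) {x₀ x : E} (hx : f x ≤ f x₀) {r : ℝ}
    (hr₀ : 0 ≤ r) (hr : r ≤ dist x₀ x) : ∃ y ∈ sphere x₀ r, f y ≤ f x₀ := by
  set t := r / dist x₀ x
  have ht : t ∈ Set.Icc (0 : ℝ) 1 :=
    ⟨div_nonneg hr₀ dist_nonneg, div_le_one_of_le₀ hr dist_nonneg⟩
  refine ⟨AffineMap.lineMap x₀ x t, ?_, ?_⟩
  · rw [mem_sphere, dist_lineMap_left, Real.norm_of_nonneg ht.1]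
    exact div_mul_cancel_of_imp fun h => le_antisymm (h ▸ hr) hr₀
  · calc f (AffineMap.lineMap x₀ x t)
        ≤ max (f x₀) (f x) := hf.le_on_segment trivial trivial (lineMap_mem_segment ℝ _ _ ht)
      _ = f x₀ := max_eq_left hx

theorem eventually_dist_lt_of_isMinOn {ι E : Type*} [NormedAddCommGroup E] [NormedSpace ℝ E]
    [ProperSpace E] {l : Filter ι} {f : ι → E → ℝ} {g : E → ℝ} {x₀ : E} {x : ι → E}
    (hf : ∀ i, ConvexOn ℝ Set.univ (f i)) (hg : Continuous g)
    (hg_min : ∀ y, y ≠ x₀ → g x₀ < g y) {r : ℝ} (hr : 0 < r)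
    (hfg : TendstoUniformlyOn f g l (closedBall x₀ r))
    (hx : ∀ i, IsMinOn (f i) Set.univ (x i)) :
    ∀ᶠ i in l, dist (x i) x₀ < r := by
  obtain ⟨c, hc, hgc⟩ := (isCompact_sphere x₀ r).exists_forall_le' hg.continuousOn
    fun y hy => hg_min y (ne_of_mem_sphere hy hr.ne')
  filter_upwards [tendstoUniformlyOn_iff.1 hfg ((c - g x₀) / 2) (by linarith)] with i hi
  by_contra! hfar
  obtain ⟨y, hy, hfy⟩ := (hf i).exists_mem_sphere_le (isMinOn_univ_iff.1 (hx i) x₀) hr.le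
    (by rwa [dist_comm])
  have hx₀ := hi x₀ (mem_closedBall_self hr.le)
  have hy' := hi y (sphere_subset_closedBall hy)
  have hgy := hgc y hy
  rw [Real.dist_eq, abs_lt] at hx₀ hy'
  linarith [hx₀.1, hy'.2]

theorem stmt14_general (p : ℕ) (U : ℕ → EuclideanSpace ℝ (Fin p) → ℝ)
    (Uinf : EuclideanSpace ℝ (Fin p) → ℝ)
    (ξinf : EuclideanSpace ℝ (Fin p)) (ξ : ℕ → EuclideanSpace ℝ (Fin p))
    (hUconv : ∀ n, ConvexOn ℝ Set.univ (U n))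
    (hUinfconv : ConvexOn ℝ Set.univ Uinf)
    (huniq : ∀ s, s ≠ ξinf → Uinf ξinf < Uinf s)
    (hunif : ∀ k : ℝ, TendstoUniformlyOn U Uinf atTop {s | ‖s‖ ≤ k})
    (hξ : ∀ n s, U n (ξ n) ≤ U n s) :
    Tendsto ξ atTop (𝓝 ξinf) := by
  have hcont : Continuous Uinf := continuousOn_univ.1 (hUinfconv.continuousOn isOpen_univ)
  refine tendsto_nhds.2 fun r hr => eventually_dist_lt_of_isMinOn hUconv hcont huniq hr ?_
    fun n => isMinOn_univ_iff.2 (hξ n)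
  exact (hunif (‖ξinf‖ + r)).mono fun s hs => norm_le_of_mem_closedBall hs

/-- deterministic argmin continuity theorem for convex functions: if convex
`U_n → U_∞` uniformly on compact sets, `U_∞` is convex with unique minimizer `ξ_∞`, and
`ξ_n` minimizes `U_n`, then `ξ_n → ξ_∞`. -/
theorem stmt14 (p : ℕ) (U : ℕ → EuclideanSpace ℝ (Fin p) → ℝ)
    (Uinf : EuclideanSpace ℝ (Fin p) → ℝ)
    (ξinf : EuclideanSpace ℝ (Fin p)) (ξ : ℕ → EuclideanSpace ℝ (Fin p))
    (hUconv : ∀ n, ConvexOn ℝ Set.univ (U n))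
    (hUinfconv : ConvexOn ℝ Set.univ Uinf)
    (hmin : ∀ s, Uinf ξinf ≤ Uinf s)
    (huniq : ∀ s, s ≠ ξinf → Uinf ξinf < Uinf s)
    (hunif : ∀ k : ℝ, TendstoUniformlyOn U Uinf atTop {s | ‖s‖ ≤ k})
    (hξ : ∀ n s, U n (ξ n) ≤ U n s) :
    Tendsto ξ atTop (𝓝 ξinf) :=
  stmt14_general p U Uinf ξinf ξ hUconv hUinfconv huniq hunif hξ
end

section
/- Let β ∈ ℝ^p with support {j : β_j ≠ 0} = {1,…,p₀}, λ_n/√n → λ₀ ∈ [0,∞), and let (T_n) ⊂ ℝ^p be a convergent sequence with limit T having coordinates T_j. Set β̂_{n,j} = β_j + T_{n,j}/√n (so β̂_{n,j} → β_j). Then for each j ≤ p₀ with β_j ≠ 0, λ_n(|β̂_{n,j} + u_j/√n| − |β̂_{n,j}|) → λ₀ u_j sign(β_j); and for each j > p₀ (β_j = 0), λ_n(|β̂_{n,j} + u_j/√n| − |β̂_{n,j}|) = λ_n n^{-1/2}(|T_{n,j} + u_j| − |T_{n,j}|) → λ₀(|T_j + u_j| − |T_j|), which equals λ₀[ sign(T_j)u_j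 − 2 sign(T_j)(u_j + T_j) 1{sign(T_j)(u_j+T_j) < 0} ] if T_j ≠ 0 and λ₀|u_j| if T_j = 0. -/
open Filter Topology

/-!
Near a point `a ≠ 0` the absolute value is the linear map `x ↦ sign a * x`, and both
`β̂_{n,j}` and `β̂_{n,j} + u_j/√n` tend to `β_j`; so on the support the penalty difference is
eventually `(λ_n/√n) u_j sign β_j`. Off the support `β_j = 0`, the common factor `1/√n` comes out of
both absolute values, and the limit follows from continuity of `|·|`. The closed form for `T_j ≠ 0`
is `|s| = s - 2 s 1{s < 0}` applied to `s = sign(T_j)(u_j + T_j)`.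
-/

lemma eventually_abs_eq_sign_mul {α : Type*} {l : Filter α} {f : α → ℝ} {a : ℝ}
    (hf : Tendsto f l (𝓝 a)) (ha : a ≠ 0) : ∀ᶠ x in l, |f x| = Real.sign a * f x := by
  rcases ha.lt_or_gt with hneg | hpos
  · filter_upwards [hf.eventually (eventually_lt_nhds hneg)] with x hx
    rw [Real.sign_of_neg hneg, abs_of_neg hx, neg_one_mul]
  · filter_upwards [hf.eventually (eventually_gt_nhds hpos)] with x hx
    rw [Real.sign_of_pos hpos, abs_of_pos hx, one_mul]

lemma Filter.Tendsto.div_sqrt_natCast {c : ℕ → ℝ} {t : ℝ} (hc : Tendsto c atTop (𝓝 t)) :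
    Tendsto (fun n : ℕ => c n / Real.sqrt n) atTop (𝓝 0) := by
  have hinv : Tendsto (fun n : ℕ => (Real.sqrt n)⁻¹) atTop (𝓝 0) :=
    tendsto_inv_atTop_zero.comp (Real.tendsto_sqrt_atTop.comp tendsto_natCast_atTop_atTop)
  simpa [div_eq_mul_inv] using hc.mul hinv

lemma tendsto_mul_abs_add_div_sqrt_sub_abs {lam Tn : ℕ → ℝ} {lam0 b t : ℝ} (u : ℝ) (hb : b ≠ 0)
    (hlim : Tendsto (fun n => lam n / Real.sqrt n) atTop (𝓝 lam0))
    (hT : Tendsto Tn atTop (𝓝 t)) :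
    Tendsto (fun n : ℕ => lam n * (|b + Tn n / Real.sqrt n + u / Real.sqrt n|
        - |b + Tn n / Real.sqrt n|)) atTop (𝓝 (lam0 * u * Real.sign b)) := by
  have hest : Tendsto (fun n : ℕ => b + Tn n / Real.sqrt n) atTop (𝓝 b) := by
    simpa using tendsto_const_nhds.add hT.div_sqrt_natCast
  have hpert : Tendsto (fun n : ℕ => b + Tn n / Real.sqrt n + u / Real.sqrt n) atTop (𝓝 b) := by
    simpa using hest.add (tendsto_const_nhds (x := u)).div_sqrt_natCast
  have hlin : Tendsto (fun n => lam n / Real.sqrt n * (u * Real.sign b)) atTop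
      (𝓝 (lam0 * u * Real.sign b)) := by
    simpa [mul_assoc] using hlim.mul_const (u * Real.sign b)
  refine hlin.congr' ?_
  filter_upwards [eventually_abs_eq_sign_mul hest hb, eventually_abs_eq_sign_mul hpert hb]
    with n hest_n hpert_n
  rw [hest_n, hpert_n]
  ring

lemma abs_div_add_div_sub_abs_div {c : ℝ} (x y : ℝ) (hc : 0 ≤ c) :
    |x / c + y / c| - |x / c| = c⁻¹ * (|x + y| - |x|) := by
  rw [← add_div, abs_div, abs_div, abs_of_nonneg hc]
  ring

lemma abs_eq_sub_two_mul_ite (s : ℝ) : |s| = s - 2 * s * (if s < 0 then 1 else 0) := by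
  split_ifs with hs
  · rw [abs_of_neg hs]; ring
  · rw [abs_of_nonneg (not_lt.mp hs)]; ring

lemma abs_add_sub_abs_of_ne_zero {t : ℝ} (u : ℝ) (ht : t ≠ 0) :
    |t + u| - |t| = Real.sign t * u
      - 2 * Real.sign t * (u + t) * (if Real.sign t * (u + t) < 0 then 1 else 0) := by
  have habs_t : |t| = Real.sign t * t :=
    (eventually_abs_eq_sign_mul tendsto_id ht).self_of_nhds
  have habs_sign : |Real.sign t| = 1 := by
    rcases Real.sign_apply_eq_of_ne_zero t ht with h | h <;> simp [h]
  have habs_tu : |t + u| = |Real.sign t * (u + t)| := by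
    rw [abs_mul, habs_sign, one_mul, add_comm]
  rw [habs_tu, abs_eq_sub_two_mul_ite, habs_t]
  ring

theorem stmt19_general (p p₀ : ℕ) (β : Fin p → ℝ)
    (hsupp : ∀ j : Fin p, β j ≠ 0 ↔ (j : ℕ) < p₀)
    (lam : ℕ → ℝ) (lam0 : ℝ)
    (hlimit : Tendsto (fun n => lam n / Real.sqrt n) atTop (𝓝 lam0))
    (Tn : ℕ → Fin p → ℝ) (T : Fin p → ℝ)
    (hT : ∀ j, Tendsto (fun n => Tn n j) atTop (𝓝 (T j)))
    (u : Fin p → ℝ) :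
    (∀ j : Fin p, (j : ℕ) < p₀ →
      Tendsto (fun n : ℕ => lam n * (|β j + Tn n j / Real.sqrt n + u j / Real.sqrt n|
          - |β j + Tn n j / Real.sqrt n|)) atTop
        (𝓝 (lam0 * u j * Real.sign (β j)))) ∧
    (∀ j : Fin p, p₀ ≤ (j : ℕ) →
      (∀ n : ℕ, 1 ≤ n →
        lam n * (|β j + Tn n j / Real.sqrt n + u j / Real.sqrt n|
            - |β j + Tn n j / Real.sqrt n|)
          = lam n * (Real.sqrt n)⁻¹ * (|Tn n j + u j| - |Tn n j|)) ∧
      Tendsto (fun n : ℕ => lam n * (|β j + Tn n j / Real.sqrt n + u j / Real.sqrt n|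
          - |β j + Tn n j / Real.sqrt n|)) atTop
        (𝓝 (lam0 * (|T j + u j| - |T j|))) ∧
      (T j ≠ 0 → lam0 * (|T j + u j| - |T j|)
          = lam0 * (Real.sign (T j) * u j
            - 2 * Real.sign (T j) * (u j + T j)
              * (if Real.sign (T j) * (u j + T j) < 0 then 1 else 0))) ∧
      (T j = 0 → lam0 * (|T j + u j| - |T j|) = lam0 * |u j|)) := by
  refine ⟨fun j hj => tendsto_mul_abs_add_div_sqrt_sub_abs (u j) ((hsupp j).mpr hj) hlimit (hT j),
    fun j hj => ?_⟩
  have hβ : β j = 0 := not_not.mp (mt (hsupp j).mp (not_lt.mpr hj))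
  have hfactor : ∀ n : ℕ, lam n * (|β j + Tn n j / Real.sqrt n + u j / Real.sqrt n|
      - |β j + Tn n j / Real.sqrt n|) = lam n * (Real.sqrt n)⁻¹ * (|Tn n j + u j| - |Tn n j|) := by
    intro n
    rw [hβ, zero_add, abs_div_add_div_sub_abs_div _ _ (Real.sqrt_nonneg _), mul_assoc]
  refine ⟨fun n _ => hfactor n, ?_, fun hTj => by rw [abs_add_sub_abs_of_ne_zero _ hTj],
    fun hTj => by rw [hTj, zero_add, abs_zero, sub_zero]⟩
  simp_rw [hfactor, ← div_eq_mul_inv]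
  exact hlimit.mul ((((hT j).add_const (u j)).abs).sub (hT j).abs)

/-- behaviour of the bootstrap penalty term with `β̂_{n,j} = β_j + T_{n,j}/√n`
and `T_n → T`.  On the support (`j < p₀`, `β_j ≠ 0`) the term converges to
`λ₀ u_j sign(β_j)`; off the support it equals `λ_n n^{-1/2}(|T_{n,j}+u_j| − |T_{n,j}|)`
and converges to `λ₀(|T_j+u_j| − |T_j|)`, which equals
`λ₀[sign(T_j)u_j − 2 sign(T_j)(u_j+T_j) 1{sign(T_j)(u_j+T_j)<0}]` if `T_j ≠ 0`
and `λ₀|u_j|` if `T_j = 0`. -/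
theorem stmt19 (p p₀ : ℕ) (β : Fin p → ℝ)
    (hsupp : ∀ j : Fin p, β j ≠ 0 ↔ (j : ℕ) < p₀)
    (lam : ℕ → ℝ) (hlam : ∀ n, 0 ≤ lam n) (lam0 : ℝ) (hlam0 : 0 ≤ lam0)
    (hlimit : Tendsto (fun n => lam n / Real.sqrt n) atTop (𝓝 lam0))
    (Tn : ℕ → Fin p → ℝ) (T : Fin p → ℝ)
    (hT : ∀ j, Tendsto (fun n => Tn n j) atTop (𝓝 (T j)))
    (u : Fin p → ℝ) :
    (∀ j : Fin p, (j : ℕ) < p₀ →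
      Tendsto (fun n : ℕ => lam n * (|β j + Tn n j / Real.sqrt n + u j / Real.sqrt n|
          - |β j + Tn n j / Real.sqrt n|)) atTop
        (𝓝 (lam0 * u j * Real.sign (β j)))) ∧
    (∀ j : Fin p, p₀ ≤ (j : ℕ) →
      (∀ n : ℕ, 1 ≤ n →
        lam n * (|β j + Tn n j / Real.sqrt n + u j / Real.sqrt n|
            - |β j + Tn n j / Real.sqrt n|)
          = lam n * (Real.sqrt n)⁻¹ * (|Tn n j + u j| - |Tn n j|)) ∧
      Tendsto (fun n : ℕ => lam n * (|β j + Tn n j / Real.sqrt n + u j / Real.sqrt n|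
          - |β j + Tn n j / Real.sqrt n|)) atTop
        (𝓝 (lam0 * (|T j + u j| - |T j|))) ∧
      (T j ≠ 0 → lam0 * (|T j + u j| - |T j|)
          = lam0 * (Real.sign (T j) * u j
            - 2 * Real.sign (T j) * (u j + T j)
              * (if Real.sign (T j) * (u j + T j) < 0 then 1 else 0))) ∧
      (T j = 0 → lam0 * (|T j + u j| - |T j|) = lam0 * |u j|)) :=
  stmt19_general p p₀ β hsupp lam lam0 hlimit Tn T hT u
end
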